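/- arXiv:2403.00342 — 5 statements merged into one kernel-verified Lean document; each statement's English description precedes it below -/
import Mathlib

section
/- Let V be a finite-dimensional complex vector space, U ⊆ ℂ an open set and r a non-negative integer. Consider the space of V-configurations of rank r over U, i.e. pairs (A, ι) with A ∈ M_r(ℂ) and ι : V → ℂ^r linear such that every eigenvalue of A lies in U and the linear map V^{⊕r} → ℂ^r, (v_0, …, v_{r−1}) ↦ ∑_{i=0}^{r−1} A^i ι(v_i), is surjective, topologized as a subspace of M_r(ℂ) × Hom_ℂ(V, ℂ^r). Then the left action of GL_r(ℂ) given by g·(A, ι) = (g A g^{−1}, g ∘ ι) is free and proper (the map GL_r(ℂ) × X → X × X, (g, x) ↦ (g·x, x), is a proper map). -/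
open Matrix

/-- The space of `V`-configurations of rank `r` over `U ⊆ ℂ`: pairs `(A, ι)` of a
matrix `A ∈ M_r(ℂ)` and a (continuous) linear map `ι : V → ℂ^r` such that every
eigenvalue of `A` lies in `U` and `(v_0, …, v_{r−1}) ↦ ∑_i A^i ι(v_i)` is surjective,
topologized as a subspace of `M_r(ℂ) × Hom_ℂ(V, ℂ^r)`. -/
def Config (V : Type) [NormedAddCommGroup V] [NormedSpace ℂ V] (U : Set ℂ) (r : ℕ) :
    Set (Matrix (Fin r) (Fin r) ℂ × (V →L[ℂ] (Fin r → ℂ))) :=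
  {p | spectrum ℂ p.1 ⊆ U ∧
    Function.Surjective fun w : Fin r → V =>
      ∑ i : Fin r, (p.1 ^ (i : ℕ)).mulVec (p.2 (w i))}

/-- The left action of `GL_r(ℂ)`: `g · (A, ι) = (g A g⁻¹, g ∘ ι)`. -/
noncomputable def confAct {V : Type} [NormedAddCommGroup V] [NormedSpace ℂ V] {r : ℕ}
    (g : GL (Fin r) ℂ) (p : Matrix (Fin r) (Fin r) ℂ × (V →L[ℂ] (Fin r → ℂ))) :
    Matrix (Fin r) (Fin r) ℂ × (V →L[ℂ] (Fin r → ℂ)) :=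
  ((g : Matrix (Fin r) (Fin r) ℂ) * p.1 * ((g⁻¹ : GL (Fin r) ℂ) : Matrix (Fin r) (Fin r) ℂ),
    (LinearMap.toContinuousLinearMap
      ((g : Matrix (Fin r) (Fin r) ℂ).mulVecLin)).comp p.2)

/-! The controllability map `Φ(A, ι) : Vʳ → ℂʳ, w ↦ ∑ Aⁱ ι(wᵢ)` satisfies `Φ(g·p) = g ∘ Φ(p)`.
Composing with a fixed right inverse `W` of a surjective `Φ(p₀)` gives a continuous
`c(p) = Φ(p) ∘ W` with values in matrices, `c(g·p) = g c(p)` and `c(p₀) = 1`. Such an equivariant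
frame makes the stabiliser of `p₀` trivial, and if `pₙ → p₀`, `gₙ·pₙ → q` then
`gₙ = c(gₙ·pₙ) c(pₙ)⁻¹ → c(q)`. Running the same argument for `gₙ⁻¹`, with a frame at `q`, shows
that `gₙ` converges in `GL_r(ℂ)`, which is properness. -/

open Filter Topology

theorem Units.exists_tendsto_of_tendsto_val_of_tendsto_inv {α M : Type*} [Monoid M]
    [TopologicalSpace M] [ContinuousMul M] [T2Space M] {l : Filter α} [l.NeBot] {u : α → Mˣ}
    {a b : M} (ha : Tendsto (fun i ↦ (u i : M)) l (𝓝 a))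
    (hb : Tendsto (fun i ↦ (((u i)⁻¹ : Mˣ) : M)) l (𝓝 b)) :
    ∃ u₀ : Mˣ, Tendsto u l (𝓝 u₀) := by
  have hab : a * b = 1 :=
    tendsto_nhds_unique (ha.mul hb) (by simpa only [Units.mul_inv] using tendsto_const_nhds)
  have hba : b * a = 1 :=
    tendsto_nhds_unique (hb.mul ha) (by simpa only [Units.inv_mul] using tendsto_const_nhds)
  refine ⟨⟨a, b, hab, hba⟩, ?_⟩
  rw [Units.isEmbedding_embedProduct.tendsto_nhds_iff]
  exact ha.prodMk_nhds ((MulOpposite.continuous_op.tendsto _).comp hb)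

theorem tendsto_of_mul_eq_of_isUnit {α M : Type*} [MonoidWithZero M] [TopologicalSpace M]
    [ContinuousMul M] {l : Filter α} {a b c : α → M} {b₀ c₀ : M} (h : ∀ i, a i * b i = c i)
    (hb : Tendsto b l (𝓝 b₀)) (hc : Tendsto c l (𝓝 c₀)) (hunit : ∀ᶠ i in l, IsUnit (b i))
    (hinv : ContinuousAt Ring.inverse b₀) : Tendsto a l (𝓝 (c₀ * Ring.inverse b₀)) := by
  refine (hc.mul (hinv.tendsto.comp hb)).congr' ?_
  filter_upwards [hunit] with i hi
  rw [Function.comp_apply, ← h i, Ring.mul_inverse_cancel_right _ _ hi]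

namespace Matrix

variable {n R : Type*} [Fintype n] [DecidableEq n] [NormedCommRing R] [HasSummableGeomSeries R]

theorem isOpen_setOf_isUnit : IsOpen {A : Matrix n n R | IsUnit A} := by
  simp_rw [isUnit_iff_isUnit_det]
  exact Units.isOpen.preimage (continuous_id.matrix_det)

theorem continuousAt_ringInverse (A : (Matrix n n R)ˣ) :
    ContinuousAt Ring.inverse (A : Matrix n n R) := by
  rw [← funext nonsing_inv_eq_ringInverse]
  exact continuousAt_matrix_inv _
    (NormedRing.inverse_continuousAt (isUnit_iff_isUnit_det _ |>.mp A.isUnit).unit)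

end Matrix

theorem Units.eq_one_of_smul_eq_of_equivariant {M X : Type*} [Monoid M] [MulAction Mˣ X]
    {c : X → M} (hc : ∀ (g : Mˣ) x, c (g • x) = g * c x) {x : X} (hx : IsUnit (c x))
    {g : Mˣ} (hgx : g • x = x) : g = 1 := by
  have hgc : (g : M) * c x = c x := by rw [← hc, hgx]
  exact Units.ext (hx.mul_eq_right.mp hgc)

section EquivariantFrame

variable {n R X : Type*} [Fintype n] [DecidableEq n] [NormedCommRing R] [HasSummableGeomSeries R]
  [TopologicalSpace X] [MulAction (GL n R) X]

theorem tendsto_val_of_equivariant {c : X → Matrix n n R}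
    (hc : ∀ (g : GL n R) x, c (g • x) = g * c x) {x y : X} (hcx : ContinuousAt c x)
    (hcy : ContinuousAt c y) (hx : IsUnit (c x)) {α : Type*} {l : Filter α} {g : α → GL n R}
    {z : α → X} (hz : Tendsto z l (𝓝 x)) (hgz : Tendsto (fun i ↦ g i • z i) l (𝓝 y)) :
    Tendsto (fun i ↦ (g i : Matrix n n R)) l (𝓝 (c y * Ring.inverse (c x))) :=
  tendsto_of_mul_eq_of_isUnit (fun i ↦ (hc (g i) (z i)).symm) (hcx.tendsto.comp hz)
    (hcy.tendsto.comp hgz)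
    ((hcx.tendsto.comp hz).eventually (Matrix.isOpen_setOf_isUnit.mem_nhds hx))
    (Matrix.continuousAt_ringInverse hx.unit)

theorem properSMul_of_exists_equivariant [ContinuousSMul (GL n R) X] [T2Space X]
    (h : ∀ x : X, ∃ c : X → Matrix n n R, Continuous c ∧
      (∀ (g : GL n R) y, c (g • y) = g * c y) ∧ IsUnit (c x)) :
    ProperSMul (GL n R) X := by
  refine properSMul_iff_continuousSMul_ultrafilter_tendsto_t2.mpr
    ⟨inferInstance, fun 𝒰 x₁ x₂ hx ↦ ?_⟩
  have h₁ : Tendsto (fun gx : GL n R × X ↦ gx.1 • gx.2) 𝒰 (𝓝 x₁) :=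
    (continuous_fst.tendsto _).comp hx
  have h₂ : Tendsto (fun gx : GL n R × X ↦ gx.2) 𝒰 (𝓝 x₂) := (continuous_snd.tendsto _).comp hx
  obtain ⟨c₂, hc₂, hc₂_equiv, hc₂x⟩ := h x₂
  obtain ⟨c₁, hc₁, hc₁_equiv, hc₁x⟩ := h x₁
  exact Units.exists_tendsto_of_tendsto_val_of_tendsto_inv
    (tendsto_val_of_equivariant hc₂_equiv hc₂.continuousAt hc₂.continuousAt hc₂x h₂ h₁)
    (tendsto_val_of_equivariant hc₁_equiv hc₁.continuousAt hc₁.continuousAt hc₁x h₁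
      (by simpa only [inv_smul_smul] using h₂))

end EquivariantFrame

section Configuration

variable {V : Type} [NormedAddCommGroup V] [NormedSpace ℂ V] {r : ℕ}

noncomputable def controllabilityMap (p : Matrix (Fin r) (Fin r) ℂ × (V →L[ℂ] (Fin r → ℂ))) :
    (Fin r → V) →ₗ[ℂ] (Fin r → ℂ) where
  toFun w := ∑ i : Fin r, (p.1 ^ (i : ℕ)) *ᵥ p.2 (w i)
  map_add' w w' := by simp only [Pi.add_apply, map_add, mulVec_add, Finset.sum_add_distrib]
  map_smul' a w := by simp only [Pi.smul_apply, map_smul, mulVec_smul, Finset.smul_sum,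
    RingHom.id_apply]

theorem continuous_controllabilityMap_apply (w : Fin r → V) :
    Continuous fun p : Matrix (Fin r) (Fin r) ℂ × (V →L[ℂ] (Fin r → ℂ)) ↦
      controllabilityMap p w := by
  change Continuous fun p : Matrix (Fin r) (Fin r) ℂ × (V →L[ℂ] (Fin r → ℂ)) ↦
    ∑ i : Fin r, (p.1 ^ (i : ℕ)) *ᵥ p.2 (w i)
  fun_prop

theorem controllabilityMap_confAct (g : GL (Fin r) ℂ)
    (p : Matrix (Fin r) (Fin r) ℂ × (V →L[ℂ] (Fin r → ℂ))) :
    controllabilityMap (confAct g p) = (g : Matrix (Fin r) (Fin r) ℂ).mulVecLin ∘ₗ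
      controllabilityMap p := by
  refine LinearMap.ext fun w ↦ ?_
  simp only [controllabilityMap, LinearMap.coe_mk, AddHom.coe_mk, LinearMap.comp_apply,
    mulVecLin_apply, mulVec_sum]
  refine Finset.sum_congr rfl fun i _ ↦ ?_
  change (_ * _ * _) ^ (i : ℕ) *ᵥ (g : Matrix (Fin r) (Fin r) ℂ) *ᵥ _ = _
  rw [Units.conj_pow, mulVec_mulVec, mulVec_mulVec, mul_assoc, Units.inv_mul, mul_one]
  rfl

theorem confAct_mem_config {U : Set ℂ} (g : GL (Fin r) ℂ)
    {p : Matrix (Fin r) (Fin r) ℂ × (V →L[ℂ] (Fin r → ℂ))} (hp : p ∈ Config V U r) :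
    confAct g p ∈ Config V U r := by
  refine ⟨(spectrum.units_conjugate).trans_subset hp.1, ?_⟩
  have hsurj : Function.Surjective (controllabilityMap (confAct g p)) := by
    rw [controllabilityMap_confAct, LinearMap.coe_comp, coe_mulVecLin]
    exact (mulVec_surjective_iff_isUnit.mpr g.isUnit).comp hp.2
  exact hsurj

theorem confAct_one (p : Matrix (Fin r) (Fin r) ℂ × (V →L[ℂ] (Fin r → ℂ))) :
    confAct 1 p = p := by
  ext <;> simp [confAct]

theorem confAct_mul (g h : GL (Fin r) ℂ) (p : Matrix (Fin r) (Fin r) ℂ × (V →L[ℂ] (Fin r → ℂ))) :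
    confAct (g * h) p = confAct g (confAct h p) := by
  ext <;> simp [confAct, mul_assoc, mulVec_mulVec]

theorem continuous_mulVecLin_toContinuousLinearMap {n 𝕜 : Type*} [Fintype n] [DecidableEq n]
    [NontriviallyNormedField 𝕜] [CompleteSpace 𝕜] :
    Continuous fun A : Matrix n n 𝕜 ↦ LinearMap.toContinuousLinearMap A.mulVecLin :=
  (LinearMap.toContinuousLinearMap.toLinearMap ∘ₗ
    (toLin' : Matrix n n 𝕜 ≃ₗ[𝕜] _).toLinearMap).continuous_of_finiteDimensional

theorem continuous_confAct :
    Continuous fun q : GL (Fin r) ℂ × (Matrix (Fin r) (Fin r) ℂ × (V →L[ℂ] (Fin r → ℂ))) ↦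
      confAct q.1 q.2 :=
  (((Units.continuous_val.comp continuous_fst).mul (continuous_fst.comp continuous_snd)).mul
    (Units.continuous_coe_inv.comp continuous_fst)).prodMk
    ((continuous_mulVecLin_toContinuousLinearMap.comp
      (Units.continuous_val.comp continuous_fst)).clm_comp (continuous_snd.comp continuous_snd))

variable {U : Set ℂ}

noncomputable instance : MulAction (GL (Fin r) ℂ) (Config V U r) where
  smul g p := ⟨confAct g p.1, confAct_mem_config g p.2⟩
  one_smul p := Subtype.ext (confAct_one p.1)
  mul_smul g h p := Subtype.ext (confAct_mul g h p.1)

theorem Config.coe_smul (g : GL (Fin r) ℂ) (p : Config V U r) :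
    ((g • p : Config V U r) : Matrix (Fin r) (Fin r) ℂ × (V →L[ℂ] (Fin r → ℂ))) =
      confAct g p :=
  rfl

instance : ContinuousSMul (GL (Fin r) ℂ) (Config V U r) :=
  ⟨(continuous_confAct.comp (continuous_fst.prodMk
    (continuous_subtype_val.comp continuous_snd))).subtype_mk _⟩

theorem Config.exists_equivariant_frame (x : Config V U r) :
    ∃ c : Config V U r → Matrix (Fin r) (Fin r) ℂ, Continuous c ∧
      (∀ (g : GL (Fin r) ℂ) y, c (g • y) = g * c y) ∧ IsUnit (c x) := by
  obtain ⟨W, hW⟩ := (controllabilityMap (V := V) x.1).exists_rightInverse_of_surjective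
    (LinearMap.range_eq_top.mpr x.2.2)
  refine ⟨fun y ↦ LinearMap.toMatrix' (controllabilityMap y.1 ∘ₗ W), ?_, fun g y ↦ ?_, ?_⟩
  · refine continuous_matrix fun i j ↦ ?_
    simp only [LinearMap.toMatrix'_apply, LinearMap.comp_apply]
    exact (continuous_apply i).comp
      ((continuous_controllabilityMap_apply _).comp continuous_subtype_val)
  · dsimp only
    rw [Config.coe_smul, controllabilityMap_confAct, LinearMap.comp_assoc,
      LinearMap.toMatrix'_comp, ← toLin'_apply', LinearMap.toMatrix'_toLin']
  · dsimp only
    rw [hW, LinearMap.toMatrix'_id]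
    exact isUnit_one

instance : ProperSMul (GL (Fin r) ℂ) (Config V U r) :=
  properSMul_of_exists_equivariant Config.exists_equivariant_frame

end Configuration

theorem configuration_action_free_and_proper_general
    (V : Type) [NormedAddCommGroup V] [NormedSpace ℂ V]
    (U : Set ℂ) (r : ℕ) :
    ∃ hmem : ∀ (g : GL (Fin r) ℂ) (p : Config V U r),
        confAct g (p : Matrix (Fin r) (Fin r) ℂ × (V →L[ℂ] (Fin r → ℂ))) ∈ Config V U r,
      (∀ (g : GL (Fin r) ℂ) (p : Config V U r),
          confAct g (p : Matrix (Fin r) (Fin r) ℂ × (V →L[ℂ] (Fin r → ℂ))) = (p : _) →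
          g = 1) ∧
      IsProperMap (fun q : GL (Fin r) ℂ × Config V U r =>
        ((⟨confAct q.1 (q.2 : _), hmem q.1 q.2⟩ : Config V U r), q.2)) := by
  refine ⟨fun g p ↦ confAct_mem_config g p.2, fun g p hgp ↦ ?_,
    ProperSMul.isProperMap_smul_pair⟩
  obtain ⟨c, -, hc, hcp⟩ := Config.exists_equivariant_frame p
  exact Units.eq_one_of_smul_eq_of_equivariant hc hcp (Subtype.ext hgp)

/-- The `GL_r(ℂ)`-action on the space of `V`-configurations of rank
`r` over an open set `U ⊆ ℂ` is well defined, free, and proper (the map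
`GL_r(ℂ) × X → X × X`, `(g, x) ↦ (g·x, x)` is a proper map). -/
theorem configuration_action_free_and_proper
    (V : Type) [NormedAddCommGroup V] [NormedSpace ℂ V] [FiniteDimensional ℂ V]
    (U : Set ℂ) (hU : IsOpen U) (r : ℕ) :
    ∃ hmem : ∀ (g : GL (Fin r) ℂ) (p : Config V U r),
        confAct g (p : Matrix (Fin r) (Fin r) ℂ × (V →L[ℂ] (Fin r → ℂ))) ∈ Config V U r,
      (∀ (g : GL (Fin r) ℂ) (p : Config V U r),
          confAct g (p : Matrix (Fin r) (Fin r) ℂ × (V →L[ℂ] (Fin r → ℂ))) = (p : _) →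
          g = 1) ∧
      IsProperMap (fun q : GL (Fin r) ℂ × Config V U r =>
        ((⟨confAct q.1 (q.2 : _), hmem q.1 q.2⟩ : Config V U r), q.2)) :=
  configuration_action_free_and_proper_general V U r
end

section
/- Let m(z) = (az + b)(cz + d)^{−1} be a Möbius transformation with ad − bc ≠ 0 and c ≠ 0. Let V be a finite-dimensional complex vector space, r ∈ ℕ, A ∈ M_r(ℂ) and ι : V → ℂ^r a linear map such that the ℂ-span of {A^i (ι v) : 0 ≤ i ≤ r−1, v ∈ V} is all of ℂ^r. Suppose −d/c is not an eigenvalue of A, so that cA + d·I is invertible and m(A) := (aA + b·I)(cA + d·I)^{−1} is well defined. Then the ℂ-span of {m(A)^i (ι v) : 0 ≤ i ≤ r−1, v ∈ V} is also all of ℂ^r. -/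
open Polynomial Matrix

private lemma matrix_inv_eq_aeval {n : ℕ} (B : Matrix (Fin n) (Fin n) ℂ)
    (hB : IsUnit B.det) : ∃ q : ℂ[X], B⁻¹ = aeval B q := by
  set c0 := B.charpoly.coeff 0 with hc0
  have hdet : B.det = (-1) ^ n * c0 := by
    simpa using Matrix.det_eq_sign_charpoly_coeff B
  have hc0ne : c0 ≠ 0 := by
    intro h
    rw [h, mul_zero] at hdet
    exact hB.ne_zero hdet
  refine ⟨(-c0⁻¹) • divX B.charpoly, Matrix.inv_eq_right_inv ?_⟩
  rw [_root_.map_smul, mul_smul_comm]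
  have h1 : B * aeval B (divX B.charpoly) = aeval B (X * divX B.charpoly) := by
    rw [_root_.map_mul, aeval_X]
  have h2 : X * divX B.charpoly = B.charpoly - C c0 := by
    rw [eq_sub_iff_add_eq, X_mul_divX_add]
  rw [h1, h2, map_sub, Matrix.aeval_self_charpoly, aeval_C, Algebra.algebraMap_eq_smul_one,
    zero_sub, smul_neg, neg_smul, neg_neg, smul_smul, inv_mul_cancel₀ hc0ne, one_smul]

private lemma aeval_mulVec_mem_span {r : ℕ} (hr : 0 < r) (B : Matrix (Fin r) (Fin r) ℂ)
    (w : Fin r → ℂ) (p : ℂ[X]) (S : Set (Fin r → ℂ))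
    (hS : ∀ i < r, (B ^ i).mulVec w ∈ S) :
    (aeval B p).mulVec w ∈ Submodule.span ℂ S := by
  rw [Matrix.aeval_eq_aeval_mod_charpoly]
  set q := p %ₘ B.charpoly with hq
  have hdeg : q.natDegree < r := by
    rcases eq_or_ne q 0 with h0 | h0
    · simpa [h0] using hr
    · have h1 : q.degree < B.charpoly.degree :=
        Polynomial.degree_modByMonic_lt p (Matrix.charpoly_monic B)
      have h2 : B.charpoly.natDegree = r := by
        simpa using Matrix.charpoly_natDegree_eq_dim B
      have := Polynomial.natDegree_lt_natDegree h0 h1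
      omega
  rw [Polynomial.aeval_eq_sum_range' hdeg]
  have hsum : ((∑ i ∈ Finset.range r, q.coeff i • B ^ i).mulVec w)
      = ∑ i ∈ Finset.range r, (q.coeff i • B ^ i).mulVec w := by
    have := map_sum (Matrix.mulVec.addMonoidHomLeft w)
      (fun i => q.coeff i • B ^ i) (Finset.range r)
    simp only [Matrix.mulVec.addMonoidHomLeft, AddMonoidHom.coe_mk, ZeroHom.coe_mk] at this
    exact this
  rw [hsum]
  simp only [Matrix.smul_mulVec]
  exact Submodule.sum_mem _ fun i hi => Submodule.smul_mem _ _
    (Submodule.subset_span (hS i (Finset.mem_range.mp hi)))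

/-- Let `m(z) = (az+b)(cz+d)⁻¹` be a Möbius transformation
(`ad − bc ≠ 0`, `c ≠ 0`), `A ∈ M_r(ℂ)`, `ι : V → ℂ^r` linear, such that the vectors
`A^i (ι v)`, `0 ≤ i ≤ r−1`, span `ℂ^r`. If `−d/c` is not an eigenvalue of `A`, so that
`m(A) = (aA + b)(cA + d)⁻¹` is defined, then the vectors `m(A)^i (ι v)`,
`0 ≤ i ≤ r−1`, also span `ℂ^r`. -/
theorem mobius_preserves_configuration
    {V : Type} [AddCommGroup V] [Module ℂ V] [FiniteDimensional ℂ V]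
    (r : ℕ) (a b c d : ℂ) (habcd : a * d - b * c ≠ 0) (hc : c ≠ 0)
    (A : Matrix (Fin r) (Fin r) ℂ) (ι : V →ₗ[ℂ] (Fin r → ℂ))
    (hA : (-(d / c)) ∉ spectrum ℂ A)
    (hspan : Submodule.span ℂ
        {x : Fin r → ℂ | ∃ i < r, ∃ v : V, x = (A ^ i).mulVec (ι v)} = ⊤) :
    Submodule.span ℂ
        {x : Fin r → ℂ | ∃ i < r, ∃ v : V,
          x = (((a • A + b • (1 : Matrix (Fin r) (Fin r) ℂ)) *
                (c • A + d • (1 : Matrix (Fin r) (Fin r) ℂ))⁻¹) ^ i).mulVec (ι v)} = ⊤ := by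
  rcases Nat.eq_zero_or_pos r with hr | hr
  · subst hr
    exact Subsingleton.elim _ _
  set N : Matrix (Fin r) (Fin r) ℂ := c • A + d • 1 with hN
  set P : Matrix (Fin r) (Fin r) ℂ := a • A + b • 1 with hP
  set M : Matrix (Fin r) (Fin r) ℂ := P * N⁻¹ with hM
  -- N is invertible
  have hU : IsUnit ((algebraMap ℂ (Matrix (Fin r) (Fin r) ℂ)) (-(d/c)) - A) := by
    rw [spectrum.mem_iff, not_not] at hA; exact hA
  have hNU : N = (-c) • ((algebraMap ℂ (Matrix (Fin r) (Fin r) ℂ)) (-(d/c)) - A) := by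
    rw [Algebra.algebraMap_eq_smul_one, hN]
    match_scalars <;> field_simp
  have hNdet : IsUnit N.det := by
    rw [hNU, Matrix.det_smul, Fintype.card_fin]
    exact (IsUnit.pow r (Ne.isUnit (neg_ne_zero.mpr hc))).mul
      ((Matrix.isUnit_iff_isUnit_det _).mp hU)
  have hMN : M * N = P := by
    rw [hM, Matrix.mul_assoc, Matrix.nonsing_inv_mul N hNdet, Matrix.mul_one]
  have hNN : N * N⁻¹ = 1 := Matrix.mul_nonsing_inv N hNdet
  have hNN' : N⁻¹ * N = 1 := Matrix.nonsing_inv_mul N hNdet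
  have hAN : A * N = N * A := by
    rw [hN]
    simp only [Matrix.mul_add, Matrix.add_mul, Matrix.mul_smul, Matrix.smul_mul,
      Matrix.mul_one, Matrix.one_mul]
  have hcomm : N⁻¹ * A = A * N⁻¹ := by
    calc N⁻¹ * A = N⁻¹ * A * (N * N⁻¹) := by rw [hNN, Matrix.mul_one]
    _ = N⁻¹ * (A * N) * N⁻¹ := by noncomm_ring
    _ = N⁻¹ * (N * A) * N⁻¹ := by rw [hAN]
    _ = (N⁻¹ * N) * (A * N⁻¹) := by noncomm_ring
    _ = A * N⁻¹ := by rw [hNN', Matrix.one_mul]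
  set α := a * d - b * c with hα
  set K : Matrix (Fin r) (Fin r) ℂ := a • 1 - c • M with hK
  have hKN : K * N = α • 1 := by
    rw [hK, Matrix.sub_mul, Matrix.smul_mul, Matrix.one_mul, Matrix.smul_mul, hM,
      Matrix.mul_assoc, hNN', Matrix.mul_one, hN, hP]
    match_scalars <;> ring
  have hKinv : K = α • N⁻¹ := by
    calc K = K * (N * N⁻¹) := by rw [hNN, Matrix.mul_one]
    _ = (K * N) * N⁻¹ := by rw [Matrix.mul_assoc]
    _ = α • N⁻¹ := by rw [hKN, Matrix.smul_mul, Matrix.one_mul]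
  have hKdet : IsUnit K.det := by
    rw [hKinv, Matrix.det_smul, Fintype.card_fin]
    exact (IsUnit.pow r habcd.isUnit).mul (Matrix.isUnit_nonsing_inv_det N hNdet)
  have hKA : K * A = d • M - b • 1 := by
    have h1 : d • P - b • N = α • A := by
      rw [hP, hN]; match_scalars <;> ring
    calc K * A = α • (A * N⁻¹) := by rw [hKinv, Matrix.smul_mul, hcomm]
    _ = (α • A) * N⁻¹ := by rw [Matrix.smul_mul]
    _ = (d • P - b • N) * N⁻¹ := by rw [h1]
    _ = d • (P * N⁻¹) - b • (N * N⁻¹) := by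
        rw [Matrix.sub_mul, Matrix.smul_mul, Matrix.smul_mul]
    _ = d • M - b • 1 := by rw [hNN, ← hM]
  have hAeq : A = K⁻¹ * (d • M - b • 1) := by
    rw [← hKA, ← Matrix.mul_assoc, Matrix.nonsing_inv_mul K hKdet, Matrix.one_mul]
  -- K and d•M - b•1 are aeval of M
  obtain ⟨qk, hqk⟩ := matrix_inv_eq_aeval K hKdet
  have hKaev : K = aeval M (C a - C c * X) := by
    rw [map_sub, _root_.map_mul, aeval_C, aeval_C, aeval_X,
      Algebra.algebraMap_eq_smul_one, Algebra.algebraMap_eq_smul_one, hK, smul_mul_assoc,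
      Matrix.one_mul]
  have hKinvaev : K⁻¹ = aeval M (qk.comp (C a - C c * X)) := by
    rw [aeval_comp, ← hKaev, hqk]
  set qA : ℂ[X] := qk.comp (C a - C c * X) * (C d * X - C b) with hqA
  have hAaev : A = aeval M qA := by
    rw [hqA, _root_.map_mul, ← hKinvaev, hAeq]
    congr 1
    rw [map_sub, _root_.map_mul, aeval_C, aeval_C, aeval_X,
      Algebra.algebraMap_eq_smul_one, Algebra.algebraMap_eq_smul_one, smul_mul_assoc,
      Matrix.one_mul]
  rw [eq_top_iff, ← hspan, Submodule.span_le]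
  rintro x ⟨i, hi, v, rfl⟩
  have hpow : A ^ i = aeval M (qA ^ i) := by rw [map_pow, ← hAaev]
  rw [hpow]
  exact aeval_mulVec_mem_span hr M (ι v) (qA ^ i) _ (fun j hj => ⟨j, hj, v, rfl⟩)
end

section
/- Let d ≥ 1 and let M ∈ M_d(ℂ[X]) be a d × d matrix over the polynomial ring ℂ[X] with det M ≠ 0. Then multiplication by M on the free module ℂ[X]^d is injective, and the quotient module ℂ[X]^d / M·ℂ[X]^d is a finite-dimensional complex vector space whose dimension over ℂ equals the degree of the polynomial det M. -/
/-!
Over the principal ideal domain `ℂ[X]`, the image `N` of an injective endomorphism `f` of a free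
module of rank `d` has a Smith normal form: bases `b'` of the module and `a i • b' i` of `N`. Hence
the quotient is `∏ i, ℂ[X] ⧸ (a i)`, of dimension `∑ i, deg (a i)` over `ℂ`. On the other hand
`f` differs from the diagonal map `b' i ↦ a i • b' i` by an automorphism, so `det f` is associated
to `∏ i, a i` and has the same degree.
-/

open Module Polynomial

namespace Submodule

section PrincipalIdealDomain

variable {ι R M : Type*} [Fintype ι] [CommRing R] [IsDomain R] [IsPrincipalIdealRing R]
  [AddCommGroup M] [Module R M]

theorem associated_det_subtype_comp_prod_smithNormalFormCoeffs (b : Basis ι R M)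
    {N : Submodule R M} (e : M ≃ₗ[R] N) :
    Associated (LinearMap.det (N.subtype ∘ₗ e))
      (∏ i, smithNormalFormCoeffs b e.finrank_eq.symm i) := by
  classical
  set h := e.finrank_eq.symm
  let b' := smithNormalFormTopBasis b h
  let e' : M ≃ₗ[R] N := b'.equiv (smithNormalFormBotBasis b h) (Equiv.refl _)
  have hdiag : N.subtype ∘ₗ (e' : M →ₗ[R] N) =
      Matrix.toLin b' b' (Matrix.diagonal (smithNormalFormCoeffs b h)) :=
    b'.ext fun i => by simp [e', b', Matrix.toLin_self, Matrix.diagonal_apply]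
  rw [← Matrix.det_diagonal, ← LinearMap.det_toLin b', ← hdiag]
  exact LinearMap.associated_det_comp_equiv _ _ _

end PrincipalIdealDomain

section Polynomial

variable {ι F M : Type*} [Fintype ι] [Field F] [AddCommGroup M] [Module F[X] M] [Module F M]
  [IsScalarTower F F[X] M]

instance (b : Basis ι F[X] M) {N : Submodule F[X] M} (h : finrank F[X] N = finrank F[X] M)
    (i : ι) : FiniteDimensional F (F[X] ⧸ Ideal.span {smithNormalFormCoeffs b h i}) :=
  PowerBasis.finite <| AdjoinRoot.powerBasis <| smithNormalFormCoeffs_ne_zero b h i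

theorem finiteDimensional_quotient_of_finrank_eq (b : Basis ι F[X] M) {N : Submodule F[X] M}
    (h : finrank F[X] N = finrank F[X] M) : FiniteDimensional F (M ⧸ N) :=
  ((N.quotientEquivPiSpan b h).restrictScalars F).symm.finiteDimensional

theorem finrank_quotient_eq_sum_natDegree_smithNormalFormCoeffs (b : Basis ι F[X] M)
    {N : Submodule F[X] M} (h : finrank F[X] N = finrank F[X] M) :
    finrank F (M ⧸ N) = ∑ i, (smithNormalFormCoeffs b h i).natDegree := by
  rw [finrank_quotient_eq_sum F b h]
  congr with i
  exact (AdjoinRoot.powerBasis <| smithNormalFormCoeffs_ne_zero b h i).finrank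

end Polynomial

end Submodule

namespace LinearMap

variable {F M : Type*} [Field F] [AddCommGroup M] [Module F[X] M] [Module F M]
  [IsScalarTower F F[X] M] [Module.Free F[X] M] [Module.Finite F[X] M]
  {f : M →ₗ[F[X]] M}

theorem finiteDimensional_quotient_range_of_injective (hf : Function.Injective f) :
    FiniteDimensional F (M ⧸ range f) :=
  Submodule.finiteDimensional_quotient_of_finrank_eq (Free.chooseBasis F[X] M)
    (LinearEquiv.ofInjective f hf).finrank_eq.symm

theorem finrank_quotient_range_eq_natDegree_det (hf : Function.Injective f) :
    finrank F (M ⧸ range f) = (LinearMap.det f).natDegree := by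
  let b := Free.chooseBasis F[X] M
  let e := LinearEquiv.ofInjective f hf
  have hdet : LinearMap.det f = LinearMap.det ((range f).subtype ∘ₗ e) := rfl
  have hassoc := Submodule.associated_det_subtype_comp_prod_smithNormalFormCoeffs b e
  rw [Submodule.finrank_quotient_eq_sum_natDegree_smithNormalFormCoeffs b e.finrank_eq.symm,
    hdet, natDegree_eq_of_degree_eq (degree_eq_degree_of_associated hassoc),
    natDegree_prod _ _ fun i _ => Submodule.smithNormalFormCoeffs_ne_zero b _ i]

end LinearMap

theorem Matrix.mulVecLin_injective_of_det_ne_zero {n R : Type*} [Fintype n] [DecidableEq n]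
    [CommRing R] [IsDomain R] {A : Matrix n n R} (hA : A.det ≠ 0) :
    Function.Injective A.mulVecLin := by
  rw [← LinearMap.ker_eq_bot, LinearMap.ker_eq_bot']
  intro v hv
  by_contra hne
  exact hA (exists_mulVec_eq_zero_iff.mp ⟨v, hne, hv⟩)

theorem quotient_by_matrix_polynomial_finrank_general
    (d : ℕ) (M : Matrix (Fin d) (Fin d) (Polynomial ℂ)) (hM : M.det ≠ 0) :
    Function.Injective M.mulVecLin ∧
      FiniteDimensional ℂ
        ((Fin d → Polynomial ℂ) ⧸
          (LinearMap.range M.mulVecLin).restrictScalars ℂ) ∧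
      Module.finrank ℂ
        ((Fin d → Polynomial ℂ) ⧸
          (LinearMap.range M.mulVecLin).restrictScalars ℂ) = M.det.natDegree := by
  have hinj := Matrix.mulVecLin_injective_of_det_ne_zero hM
  let e := Submodule.Quotient.restrictScalarsEquiv ℂ (LinearMap.range M.mulVecLin)
  have := LinearMap.finiteDimensional_quotient_range_of_injective (F := ℂ) hinj
  refine ⟨hinj, e.symm.finiteDimensional, ?_⟩
  rw [e.finrank_eq, LinearMap.finrank_quotient_range_eq_natDegree_det hinj,
    ← Matrix.toLin'_apply', LinearMap.det_toLin']

/-- For `M ∈ M_d(ℂ[X])` with `det M ≠ 0`, multiplication by `M` on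
`ℂ[X]^d` is injective, and the quotient `ℂ[X]^d / M·ℂ[X]^d` is a finite-dimensional
complex vector space of dimension `deg (det M)`. -/
theorem quotient_by_matrix_polynomial_finrank
    (d : ℕ) (hd : 1 ≤ d) (M : Matrix (Fin d) (Fin d) (Polynomial ℂ)) (hM : M.det ≠ 0) :
    Function.Injective M.mulVecLin ∧
      FiniteDimensional ℂ
        ((Fin d → Polynomial ℂ) ⧸
          (LinearMap.range M.mulVecLin).restrictScalars ℂ) ∧
      Module.finrank ℂ
        ((Fin d → Polynomial ℂ) ⧸
          (LinearMap.range M.mulVecLin).restrictScalars ℂ) = M.det.natDegree :=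
  quotient_by_matrix_polynomial_finrank_general d M hM
end

section
/- Let V be a finite-dimensional complex vector space and A ∈ End_ℂ(V) an endomorphism all of whose eigenvalues λ satisfy |λ| < 1. Then for every holomorphic map g from the open unit disk 𝔻 = {z ∈ ℂ : |z| < 1} to V there exist a unique vector v ∈ V and a holomorphic map h : 𝔻 → V with g(z) = v + (z·id_V − A)(h(z)) for all z ∈ 𝔻. (Equivalently, the map V → Coker of multiplication by (z − A) on O(𝔻; V), sending a vector to the class of the corresponding constant function, is an isomorphism.) -/
/-!
Write `g(z) = ∑ aₙ zⁿ`. As the spectral radius of `A` is `< 1`, the series `bⱼ = ∑ₙ Aⁿ aₙ₊ⱼ₊₁`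
converge and `‖bⱼ‖ tʲ` stays bounded for every `t < 1`. They satisfy `bⱼ = aⱼ₊₁ + A bⱼ₊₁`, which says
exactly that `h(z) = ∑ bⱼ zʲ` solves `g(z) = v + (z - A) h(z)` with `v = a₀ + A b₀ = ∑ Aⁿ aₙ = g(A)`.

Uniqueness: if `w = (z - A) k(z)` on a neighbourhood of the spectrum, then `k` and `z ↦ (z - A)⁻¹ w`
glue to an entire function vanishing at infinity, which is `0` by Liouville; hence `w = 0`.
-/

open Filter Metric Topology
open scoped NNReal ENNReal

theorem exists_norm_mul_pow_le_of_summable {𝕜 E : Type*} [NormedField 𝕜] [NormedAddCommGroup E]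
    [NormedSpace 𝕜 E] {a : ℕ → E} {z : 𝕜} (h : Summable fun n => z ^ n • a n) :
    ∃ M, ∀ n, ‖a n‖ * ‖z‖ ^ n ≤ M := by
  obtain ⟨M, hM⟩ := h.tendsto_atTop_zero.norm.bddAbove_range
  exact ⟨M, fun n => by simpa [norm_smul, mul_comm] using hM (Set.mem_range_self n)⟩

theorem summable_norm_mul_pow_of_norm_mul_pow_le {E : Type*} [SeminormedAddCommGroup E]
    {b : ℕ → E} {t M : ℝ} (hb : ∀ n, ‖b n‖ * t ^ n ≤ M) {r : ℝ} (hr : 0 ≤ r) (hrt : r < t) :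
    Summable fun n => ‖b n‖ * r ^ n := by
  have ht : 0 < t := hr.trans_lt hrt
  refine .of_nonneg_of_le (fun n => by positivity) (fun n => ?_)
    ((summable_geometric_of_lt_one (by positivity) ((div_lt_one ht).2 hrt)).mul_left M)
  calc ‖b n‖ * r ^ n = ‖b n‖ * t ^ n * (r / t) ^ n := by
        rw [div_pow, mul_assoc, mul_div_cancel₀ _ (by positivity)]
    _ ≤ M * (r / t) ^ n := by gcongr; exact hb n

theorem differentiableOn_tsum_pow_smul {E : Type*} [NormedAddCommGroup E] [NormedSpace ℂ E]
    [CompleteSpace E] {b : ℕ → E} {R : ℝ≥0}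
    (hb : ∀ r : ℝ≥0, r < R → Summable fun n => ‖b n‖ * (r : ℝ) ^ n) :
    DifferentiableOn ℂ (fun z => ∑' n, z ^ n • b n) (ball (0 : ℂ) R) := by
  intro z hz
  obtain ⟨r, hzr, hrR⟩ := exists_between (show ‖z‖₊ < R by simpa [← NNReal.coe_lt_coe] using hz)
  have hzr' : z ∈ ball (0 : ℂ) r := by simpa [← NNReal.coe_lt_coe] using hzr
  refine (DifferentiableOn.differentiableAt ?_ (isOpen_ball.mem_nhds hzr')).differentiableWithinAt
  refine Complex.differentiableOn_tsum_of_summable_norm (hb r hrR)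
    (fun n => (differentiableOn_id.pow n).smul_const (b n)) isOpen_ball fun n w hw => ?_
  rw [norm_smul, norm_pow, mul_comm]
  gcongr
  exact (mem_ball_zero_iff.mp hw).le

section SpectralRadius

variable {𝒜 : Type*} [NormedRing 𝒜] [NormedAlgebra ℂ 𝒜] [CompleteSpace 𝒜]

theorem spectralRadius_lt_of_forall_norm_lt (a : 𝒜) {r : ℝ≥0} (hr : 0 < r)
    (h : ∀ k ∈ spectrum ℂ a, ‖k‖ < r) : spectralRadius ℂ a < r := by
  rcases (spectrum ℂ a).eq_empty_or_nonempty with he | hne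
  · simpa [spectralRadius, he] using hr
  · exact spectrum.spectralRadius_lt_of_forall_lt_of_nonempty hne fun k hk => h k hk

theorem summable_norm_pow_mul_inv_pow (a : 𝒜) {t : ℝ≥0}
    (ht : spectralRadius ℂ a < t) : Summable fun n => ‖a ^ n‖ * ((t : ℝ)⁻¹) ^ n := by
  have ht0 : t ≠ 0 := by rintro rfl; simp at ht
  have hlt : ((t⁻¹ : ℝ≥0) : ℝ≥0∞) < (spectralRadius ℂ a)⁻¹ := by
    rwa [ENNReal.coe_inv ht0, ENNReal.inv_lt_inv]
  obtain ⟨r, htr, hr⟩ := ENNReal.lt_iff_exists_nnreal_btwn.mp hlt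
  let p : FormalMultilinearSeries ℂ ℂ 𝒜 := fun n =>
    ContinuousMultilinearMap.mkPiRing ℂ (Fin n) (a ^ n)
  -- `z ↦ (1 - z • a)⁻¹` is holomorphic on `‖z‖ < ρ⁻¹`, and `p` is its Taylor series at `0`.
  have hp : (r : ℝ≥0∞) ≤ p.radius :=
    ((spectrum.hasFPowerSeriesOnBall_inverse_one_sub_smul ℂ a).exchange_radius
      ((spectrum.differentiableOn_inverse_one_sub_smul hr).hasFPowerSeriesOnBall
        (pos_of_gt (ENNReal.coe_lt_coe.mp htr)))).r_le
  simpa [p, ContinuousMultilinearMap.norm_mkPiRing] using p.summable_norm_mul_pow (htr.trans_le hp)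

end SpectralRadius

namespace ContinuousLinearMap

section NormedField

variable {𝕜 E : Type*} [NontriviallyNormedField 𝕜] [NormedAddCommGroup E] [NormedSpace 𝕜 E]

theorem summable_pow_apply_of_norm_le [CompleteSpace E] (A : E →L[𝕜] E) {x : ℕ → E} {M s : ℝ}
    (hx : ∀ n, ‖x n‖ ≤ M * s ^ n) (hA : Summable fun n => ‖A ^ n‖ * s ^ n) :
    Summable (fun n => (A ^ n) (x n)) ∧ ‖∑' n, (A ^ n) (x n)‖ ≤ M * ∑' n, ‖A ^ n‖ * s ^ n := by
  have hle : ∀ n, ‖(A ^ n) (x n)‖ ≤ M * (‖A ^ n‖ * s ^ n) := fun n =>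
    calc ‖(A ^ n) (x n)‖ ≤ ‖A ^ n‖ * ‖x n‖ := (A ^ n).le_opNorm _
      _ ≤ ‖A ^ n‖ * (M * s ^ n) := by gcongr; exact hx n
      _ = M * (‖A ^ n‖ * s ^ n) := by ring
  exact ⟨.of_norm_bounded (hA.mul_left M) hle, tsum_of_norm_bounded (hA.hasSum.mul_left M) hle⟩

theorem tsum_pow_apply_eq_add (A : E →L[𝕜] E) {x : ℕ → E}
    (hx : Summable fun n => (A ^ n) (x (n + 1))) :
    ∑' n, (A ^ n) (x n) = x 0 + A (∑' n, (A ^ n) (x (n + 1))) := by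
  have hshift : ∀ n, (A ^ (n + 1)) (x (n + 1)) = A ((A ^ n) (x (n + 1))) := fun n => by
    rw [pow_succ', mul_apply_eq_comp]
  rw [tsum_eq_zero_add' (by simpa only [hshift] using hx.mapL A), A.map_tsum hx]
  simp only [hshift, pow_zero, one_apply_eq_self]

theorem hasSum_pow_smul_of_eq_add_apply (A : E →L[𝕜] E) {a b : ℕ → E}
    (hab : ∀ j, b j = a (j + 1) + A (b (j + 1))) {z : 𝕜} {H : E}
    (hb : HasSum (fun j => z ^ j • b j) H) :
    HasSum (fun j => z ^ j • a j) (a 0 + A (b 0) + (z • H - A H)) := by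
  have hzb : HasSum (fun j => z ^ (j + 1) • b j) (z • H) := by
    simpa [smul_smul, ← pow_succ'] using hb.const_smul z
  have hAb : HasSum (fun j => z ^ (j + 1) • A (b (j + 1))) (A H - A (b 0)) := by
    have := (hasSum_nat_add_iff' (f := fun j => A (z ^ j • b j)) 1).mpr (hb.mapL A)
    simpa only [map_smul, Finset.sum_range_one, pow_zero, one_smul] using this
  have htail : HasSum (fun j => z ^ (j + 1) • a (j + 1)) (z • H - (A H - A (b 0))) := by
    refine (hzb.sub hAb).congr_fun fun j => ?_
    rw [← smul_sub, hab j, add_sub_cancel_right]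
  convert (hasSum_nat_add_iff (f := fun j => z ^ j • a j) 1).mp htail using 1
  simp only [Finset.sum_range_one, pow_zero, one_smul]
  abel

/-- For `g(z) = ∑ aₙ zⁿ` these are the coefficients of `(g(z) - g(A)) / (z - A)`, because
`(zⁿ - Aⁿ) / (z - A) = ∑_{i + m = n - 1} zⁱ Aᵐ`. -/
noncomputable def divDiffCoeff (A : E →L[𝕜] E) (a : ℕ → E) (j : ℕ) : E :=
  ∑' n, (A ^ n) (a (n + j + 1))

theorem divDiffCoeff_eq_add (A : E →L[𝕜] E) {a : ℕ → E}
    (ha : ∀ j, Summable fun n => (A ^ n) (a (n + j + 1))) (j : ℕ) :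
    divDiffCoeff A a j = a (j + 1) + A (divDiffCoeff A a (j + 1)) := by
  have hidx : ∀ n, n + 1 + j + 1 = n + (j + 1) + 1 := fun n => by omega
  rw [divDiffCoeff, tsum_pow_apply_eq_add A (by simpa only [hidx] using ha (j + 1))]
  simp only [divDiffCoeff, hidx, zero_add]

end NormedField

variable {V : Type*} [NormedAddCommGroup V] [NormedSpace ℂ V]

theorem eq_resolvent_apply_of_smul_sub_apply_eq {A : V →L[ℂ] V} {z : ℂ}
    (hz : z ∈ resolventSet ℂ A) {x w : V} (hx : z • x - A x = w) :
    x = resolvent A z w := by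
  have : (algebraMap ℂ (V →L[ℂ] V) z - A) x = w := by simpa using hx
  rw [← this, resolvent, ← mul_apply_eq_comp, Ring.inverse_mul_cancel _ hz, one_apply_eq_self]

variable [CompleteSpace V]

theorem eq_zero_of_forall_smul_sub_apply_eq (A : V →L[ℂ] V) {U : Set ℂ} (hU : IsOpen U)
    (hAU : spectrum ℂ A ⊆ U) {k : ℂ → V} (hk : DifferentiableOn ℂ k U) {w : V}
    (hw : ∀ z ∈ U, z • k z - A (k z) = w) : w = 0 := by
  classical
  set F : ℂ → V := fun z => if z ∈ U then k z else resolvent A z w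
  have hF : ∀ z ∈ resolventSet ℂ A, F z = resolvent A z w := by
    intro z hz
    by_cases hzU : z ∈ U
    · simpa [F, hzU] using eq_resolvent_apply_of_smul_sub_apply_eq hz (hw z hzU)
    · simp [F, hzU]
  have hdiff : Differentiable ℂ F := by
    intro z
    by_cases hzU : z ∈ U
    · refine (hk.differentiableAt (hU.mem_nhds hzU)).congr_of_eventuallyEq ?_
      filter_upwards [hU.mem_nhds hzU] with y hy
      simp [F, hy]
    · have hz : z ∈ resolventSet ℂ A := spectrum.notMem_iff.mp fun h => hzU (hAU h)
      refine (((spectrum.hasDerivAt_resolvent_const_left hz).differentiableAt).clm_apply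
        (differentiableAt_const w)).congr_of_eventuallyEq ?_
      filter_upwards [(spectrum.isOpen_resolventSet A).mem_nhds hz] with y hy
      exact hF y hy
  have hres : ∀ᶠ z in Bornology.cobounded ℂ, z ∈ resolventSet ℂ A := by
    simpa [spectrum, Bornology.isBounded_def] using spectrum.isBounded (𝕜 := ℂ) A
  have hlim : Tendsto F (cocompact ℂ) (𝓝 0) := by
    rw [← cobounded_eq_cocompact]
    refine Tendsto.congr' (hres.mono fun z hz => (hF z hz).symm) ?_
    simpa [Function.comp_def] using ((apply ℂ V w).continuous.tendsto 0).comp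
      (spectrum.resolvent_tendsto_cobounded (𝕜 := ℂ) A)
  obtain ⟨z, hz⟩ := hres.exists
  have hFz : resolvent A z w = 0 := hF z hz ▸ hdiff.apply_eq_of_tendsto_cocompact z hlim
  calc w = ((algebraMap ℂ (V →L[ℂ] V) z - A) * resolvent A z) w := by
        rw [resolvent, Ring.mul_inverse_cancel _ hz, one_apply_eq_self]
    _ = 0 := by rw [mul_apply_eq_comp, hFz, map_zero]

theorem summable_and_exists_norm_divDiffCoeff_mul_pow_le (A : V →L[ℂ] V) {t : ℝ≥0}
    (ht : spectralRadius ℂ A < t) {a : ℕ → V} {M : ℝ} (ha : ∀ n, ‖a n‖ * (t : ℝ) ^ n ≤ M) :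
    (∀ j, Summable fun n => (A ^ n) (a (n + j + 1))) ∧
      ∃ K, ∀ j, ‖divDiffCoeff A a j‖ * (t : ℝ) ^ j ≤ K := by
  have ht0 : (0 : ℝ) < t := NNReal.coe_pos.mpr (ENNReal.coe_pos.mp (pos_of_gt ht))
  set s : ℝ := (t : ℝ)⁻¹
  have hsA := summable_norm_pow_mul_inv_pow A ht
  have hshift : ∀ j n, ‖a (n + j + 1)‖ ≤ M * s ^ (j + 1) * s ^ n := fun j n => by
    rw [mul_assoc, ← pow_add, inv_pow, ← div_eq_mul_inv, le_div_iff₀ (by positivity),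
      show j + 1 + n = n + j + 1 by omega]
    exact ha _
  refine ⟨fun j => (summable_pow_apply_of_norm_le A (hshift j) hsA).1,
    M * s * ∑' n, ‖A ^ n‖ * s ^ n, fun j => ?_⟩
  calc ‖divDiffCoeff A a j‖ * (t : ℝ) ^ j
      ≤ M * s ^ (j + 1) * (∑' n, ‖A ^ n‖ * s ^ n) * (t : ℝ) ^ j := by
        gcongr; exact (summable_pow_apply_of_norm_le A (hshift j) hsA).2
    _ = M * s * (∑' n, ‖A ^ n‖ * s ^ n) * (s * t) ^ j := by ring
    _ = M * s * ∑' n, ‖A ^ n‖ * s ^ n := by rw [inv_mul_cancel₀ ht0.ne', one_pow, mul_one]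

theorem exists_eq_add_smul_sub_apply_of_hasSum (A : V →L[ℂ] V) {R : ℝ≥0}
    (hA : spectralRadius ℂ A < R) {g : ℂ → V} {a : ℕ → V}
    (ha : ∀ z ∈ ball (0 : ℂ) R, HasSum (fun n => z ^ n • a n) (g z)) :
    ∃ v : V, ∃ h : ℂ → V, DifferentiableOn ℂ h (ball (0 : ℂ) R) ∧
      ∀ z ∈ ball (0 : ℂ) R, g z = v + (z • h z - A (h z)) := by
  obtain ⟨ρ, hρ, hρR⟩ := ENNReal.lt_iff_exists_coe.mp hA
  rw [ENNReal.coe_lt_coe] at hρR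
  have hbound : ∀ r : ℝ≥0, r < R → ∃ t : ℝ≥0, r < t ∧
      (∀ j, Summable fun n => (A ^ n) (a (n + j + 1))) ∧
      ∃ K, ∀ j, ‖divDiffCoeff A a j‖ * (t : ℝ) ^ j ≤ K := by
    intro r hr
    obtain ⟨t, hrt, htR⟩ := exists_between (max_lt hr hρR)
    obtain ⟨M, hM⟩ := exists_norm_mul_pow_le_of_summable
      (ha t (by simpa using htR)).summable
    refine ⟨t, (le_max_left _ _).trans_lt hrt, summable_and_exists_norm_divDiffCoeff_mul_pow_le A
      (by rw [hρ]; exact_mod_cast (le_max_right _ _).trans_lt hrt) (by simpa using hM)⟩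
  obtain ⟨-, -, hsum, -⟩ := hbound 0 (pos_of_gt hρR)
  set b := divDiffCoeff A a
  have hb : ∀ r : ℝ≥0, r < R → Summable fun j => ‖b j‖ * (r : ℝ) ^ j := by
    intro r hr
    obtain ⟨t, hrt, -, K, hK⟩ := hbound r hr
    exact summable_norm_mul_pow_of_norm_mul_pow_le hK r.2 hrt
  refine ⟨a 0 + A (b 0), fun z => ∑' j, z ^ j • b j, differentiableOn_tsum_pow_smul hb,
    fun z hz => ?_⟩
  have hzR : ‖z‖₊ < R := by simpa [← NNReal.coe_lt_coe] using hz
  have hH : HasSum (fun j => z ^ j • b j) (∑' j, z ^ j • b j) :=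
    (Summable.of_norm_bounded (hb _ hzR) fun j => by simp [norm_smul, mul_comm]).hasSum
  rw [(ha z hz).unique (A.hasSum_pow_smul_of_eq_add_apply (divDiffCoeff_eq_add A hsum) hH),
    add_assoc]

theorem exists_eq_add_smul_sub_apply (A : V →L[ℂ] V) {R : ℝ≥0} (hA : spectralRadius ℂ A < R)
    {g : ℂ → V} (hg : DifferentiableOn ℂ g (ball (0 : ℂ) R)) :
    ∃ v : V, ∃ h : ℂ → V, DifferentiableOn ℂ h (ball (0 : ℂ) R) ∧
      ∀ z ∈ ball (0 : ℂ) R, g z = v + (z • h z - A (h z)) :=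
  A.exists_eq_add_smul_sub_apply_of_hasSum hA fun z hz => by
    simpa [smul_comm _ (z ^ _)] using Complex.hasSum_taylorSeries_on_ball hg hz

end ContinuousLinearMap

/-- If every eigenvalue of `A ∈ End ℂ V` has modulus `< 1`, then for
every holomorphic `g : 𝔻 → V` there are a unique vector `v ∈ V` and a holomorphic
`h : 𝔻 → V` with `g(z) = v + (z·id − A)(h(z))` on the open unit disk. -/
theorem coker_of_z_sub_A_eq_V_on_disk
    {V : Type} [NormedAddCommGroup V] [NormedSpace ℂ V] [FiniteDimensional ℂ V]
    (A : V →L[ℂ] V) (hA : ∀ μ ∈ spectrum ℂ A, ‖μ‖ < 1)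
    (g : ℂ → V) (hg : DifferentiableOn ℂ g (Metric.ball (0 : ℂ) 1)) :
    ∃! v : V, ∃ h : ℂ → V, DifferentiableOn ℂ h (Metric.ball (0 : ℂ) 1) ∧
      ∀ z ∈ Metric.ball (0 : ℂ) 1, g z = v + (z • h z - A (h z)) := by
  have hρ : spectralRadius ℂ A < (1 : ℝ≥0) :=
    spectralRadius_lt_of_forall_norm_lt A one_pos (by simpa using hA)
  obtain ⟨v, h, hh, hgh⟩ := A.exists_eq_add_smul_sub_apply hρ (by simpa using hg)
  simp only [NNReal.coe_one] at hh hgh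
  refine ⟨v, ⟨h, hh, hgh⟩, fun v' ⟨h', hh', hgh'⟩ => ?_⟩
  have hdiff : v - v' = 0 := by
    refine A.eq_zero_of_forall_smul_sub_apply_eq isOpen_ball
      (fun μ hμ => mem_ball_zero_iff.mpr (hA μ hμ)) (hh'.sub hh) fun z hz => ?_
    rw [Pi.sub_apply, smul_sub, map_sub]
    linear_combination (norm := module) (hgh' z hz).symm.trans (hgh z hz)
  exact (sub_eq_zero.mp hdiff).symm
end

section
/- Let V be a finite-dimensional complex inner product space, k, l ∈ ℕ, and a_j ∈ End_ℂ(V) for each integer −k ≤ j ≤ l. Let H be the bounded linear operator on the Hilbert space ℓ²(ℤ; V) defined by (H v)_n = ∑_{j=−k}^{l} a_j(v_{n−j}). Assume H is invertible as a bounded operator. Define the compression H♯ on ℓ²(ℤ_{≥0}; V) by (H♯ w)_n = ∑_{j=−k}^{l} a_j(w̃_{n−j}) for n ≥ 0, where w̃ is the extension of w to ℤ by zero on negative indices. Then the kernel of H♯ is finite-dimensional and the quotient of ℓ²(ℤ_{≥0}; V) by the range of H♯ is finite-dimensional; in particular H♯ is a Fredholm operator. -/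
/-!
Write `E` for extension by zero and `P` for restriction to `ℤ_{≥0}`, so that `H♯ = P H E` and
`P E = 1`. Since `H` has bandwidth `k + l + 1`, a vector `H E w` with `P H E w = 0` is supported
on `[-k, 0)`; as `H E` is injective this embeds `ker H♯` into `V^k`. Dually, choosing `u` with
`H u = E y` gives `y = P H u = H♯ (P u) + P H (u - E P u)`, and the last term is supported on
`[0, l)` because `u - E P u` vanishes on `ℤ_{≥0}`; so `range H♯` has finite codimension.
-/

open scoped ENNReal

section FiniteCodimension

variable {K X Y Z : Type*} [Field K] [AddCommGroup X] [Module K X] [AddCommGroup Y] [Module K Y]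
  [AddCommGroup Z] [Module K Z]

theorem LinearMap.finiteDimensional_ker_comp_of_injective {G : X →ₗ[K] Y} (hG : Function.Injective G)
    (P : Y →ₗ[K] Z) (hfin : FiniteDimensional K ↥(range G ⊓ ker P)) :
    FiniteDimensional K (ker (P ∘ₗ G)) := by
  rw [ker_comp]
  have hmap : Submodule.map G (Submodule.comap G (ker P)) = range G ⊓ ker P :=
    Submodule.map_comap_eq G (ker P)
  exact (Submodule.equivMapOfInjective G hG _ ≪≫ₗ LinearEquiv.ofEq _ _ hmap).symm.finiteDimensional

theorem Submodule.finiteDimensional_quotient_of_sup_eq_top {N W : Submodule K X} (h : N ⊔ W = ⊤)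
    (hW : FiniteDimensional K W) : FiniteDimensional K (X ⧸ N) := by
  refine Module.Finite.of_surjective (N.mkQ ∘ₗ W.subtype) fun q => ?_
  obtain ⟨x, rfl⟩ := N.mkQ_surjective q
  obtain ⟨n, hn, w, hw, rfl⟩ := Submodule.mem_sup.1 (h ▸ Submodule.mem_top : x ∈ N ⊔ W)
  exact ⟨⟨w, hw⟩, by simp [(Submodule.Quotient.mk_eq_zero N).2 hn]⟩

theorem LinearMap.range_comp_comp_sup_range_eq_top {E : X →ₗ[K] Y} {P : Y →ₗ[K] X}
    (hPE : P ∘ₗ E = id) {H : Y →ₗ[K] Y} (hH : Function.Surjective H) :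
    range (P ∘ₗ H ∘ₗ E) ⊔ range (P ∘ₗ H ∘ₗ (id - E ∘ₗ P)) = ⊤ := by
  refine Submodule.eq_top_iff'.2 fun x => ?_
  obtain ⟨y, hy⟩ := hH (E x)
  refine Submodule.mem_sup.2 ⟨_, mem_range_self _ (P y), _, mem_range_self _ y, ?_⟩
  have hx : P (H y) = x := by rw [hy]; exact congr($hPE x)
  simp [hx]

end FiniteCodimension

namespace lp

section FiniteSupport

variable {𝕜 ι : Type*} [NormedField 𝕜] {E : ι → Type*} [∀ i, NormedAddCommGroup (E i)]
  [∀ i, NormedSpace 𝕜 (E i)] [∀ i, FiniteDimensional 𝕜 (E i)] {p : ℝ≥0∞}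

theorem finiteDimensional_of_forall_apply_eq_zero (s : Finset ι) {W : Submodule 𝕜 (lp E p)}
    (hW : ∀ f ∈ W, ∀ i ∉ s, f i = 0) : FiniteDimensional 𝕜 W := by
  refine FiniteDimensional.of_injective ((LinearMap.pi fun i : s => evalₗ E p i) ∘ₗ W.subtype)
    fun f g hfg => Subtype.ext <| lp.ext <| funext fun i => ?_
  by_cases hi : i ∈ s
  · exact congr_fun hfg ⟨i, hi⟩
  · rw [hW f f.2 i hi, hW g g.2 i hi]

end FiniteSupport

section HalfLine

variable {𝕜 V : Type*} [NormedField 𝕜] [NormedAddCommGroup V] [NormedSpace 𝕜 V]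

theorem memℓp_extendByZero (w : lp (fun _ : ℕ => V) 2) :
    Memℓp (fun m : ℤ => if 0 ≤ m then w m.toNat else 0) 2 := by
  refine memℓp_gen <| (Nat.cast_injective.summable_iff fun m hm => ?_).1 ?_
  · have : ¬ 0 ≤ m := fun h => hm ⟨m.toNat, Int.toNat_of_nonneg h⟩
    simp [this]
  · exact (lp.memℓp w).summable (by norm_num)

theorem memℓp_restrictNonneg (u : lp (fun _ : ℤ => V) 2) :
    Memℓp (fun n : ℕ => u n) 2 :=
  memℓp_gen <| ((lp.memℓp u).summable (by norm_num)).comp_injective Nat.cast_injective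

variable (𝕜 V)

/- `restrictNonneg` is the paper's `P_{≥0}` and `extendByZero` its adjoint `P_{≥0}*`. -/

noncomputable def extendByZero : lp (fun _ : ℕ => V) 2 →ₗ[𝕜] lp (fun _ : ℤ => V) 2 where
  toFun w := ⟨_, memℓp_extendByZero w⟩
  map_add' w₁ w₂ := lp.ext <| by
    simp only [lp.coeFn_add]
    funext m
    by_cases h : 0 ≤ m <;> simp [h]
  map_smul' c w := lp.ext <| by
    simp only [lp.coeFn_smul]
    funext m
    by_cases h : 0 ≤ m <;> simp [h]

noncomputable def restrictNonneg : lp (fun _ : ℤ => V) 2 →ₗ[𝕜] lp (fun _ : ℕ => V) 2 where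
  toFun u := ⟨_, memℓp_restrictNonneg u⟩
  map_add' _ _ := rfl
  map_smul' _ _ := rfl

variable {𝕜 V}

@[simp] theorem extendByZero_apply (w : lp (fun _ : ℕ => V) 2) (m : ℤ) :
    extendByZero 𝕜 V w m = if 0 ≤ m then w m.toNat else 0 := rfl

@[simp] theorem restrictNonneg_apply (u : lp (fun _ : ℤ => V) 2) (n : ℕ) :
    restrictNonneg 𝕜 V u n = u n := rfl

theorem restrictNonneg_comp_extendByZero :
    restrictNonneg 𝕜 V ∘ₗ extendByZero 𝕜 V = LinearMap.id :=
  LinearMap.ext fun w => lp.ext <| funext fun n => by simp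

theorem extendByZero_injective : Function.Injective (extendByZero 𝕜 V) :=
  LinearMap.injective_of_comp_eq_id _ _ restrictNonneg_comp_extendByZero

end HalfLine

end lp

section LaurentOperator

variable {𝕜 V : Type*} [NormedField 𝕜] [NormedAddCommGroup V] [NormedSpace 𝕜 V]

def IsLaurentOperator (k l : ℕ) (a : ℤ → V →L[𝕜] V)
    (H : lp (fun _ : ℤ => V) 2 →ₗ[𝕜] lp (fun _ : ℤ => V) 2) : Prop :=
  ∀ u n, H u n = ∑ j ∈ Finset.Icc (-(k : ℤ)) l, a j (u (n - j))

variable {k l : ℕ} {a : ℤ → V →L[𝕜] V} {H : lp (fun _ : ℤ => V) 2 →ₗ[𝕜] lp (fun _ : ℤ => V) 2}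

namespace IsLaurentOperator

open lp

theorem apply_eq_zero (hH : IsLaurentOperator k l a H) {u : lp (fun _ : ℤ => V) 2} {n : ℤ}
    (hu : ∀ j ∈ Finset.Icc (-(k : ℤ)) l, u (n - j) = 0) : H u n = 0 := by
  rw [hH]
  exact Finset.sum_eq_zero fun j hj => by rw [hu j hj, map_zero]

theorem apply_eq_zero_of_mem_range_inf_ker (hH : IsLaurentOperator k l a H)
    (f : lp (fun _ : ℤ => V) 2)
    (hf : f ∈ LinearMap.range (H ∘ₗ extendByZero 𝕜 V) ⊓ LinearMap.ker (restrictNonneg 𝕜 V))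
    (n : ℤ) (hn : n ∉ Finset.Ico (-(k : ℤ)) 0) : f n = 0 := by
  obtain ⟨⟨w, rfl⟩, hPf⟩ := hf
  rcases le_or_gt 0 n with hn₀ | hn₀
  · lift n to ℕ using hn₀
    exact congr($hPf n)
  · refine hH.apply_eq_zero fun j hj => ?_
    have : ¬ j ≤ n := by simp only [Finset.mem_Ico, Finset.mem_Icc] at hn hj; omega
    simp [this]

theorem apply_eq_zero_of_mem_range_comp_sub (hH : IsLaurentOperator k l a H)
    (f : lp (fun _ : ℕ => V) 2) (hf : f ∈ LinearMap.range
      (restrictNonneg 𝕜 V ∘ₗ H ∘ₗ (LinearMap.id - extendByZero 𝕜 V ∘ₗ restrictNonneg 𝕜 V)))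
    (n : ℕ) (hn : n ∉ Finset.range l) : f n = 0 := by
  obtain ⟨u, rfl⟩ := hf
  refine hH.apply_eq_zero fun j hj => ?_
  have : 0 ≤ (n : ℤ) - j := by simp only [Finset.mem_range, Finset.mem_Icc] at hn hj; omega
  simp [Int.toNat_of_nonneg this, show j ≤ n by omega]

theorem compression_eq (hH : IsLaurentOperator k l a H)
    {Hs : lp (fun _ : ℕ => V) 2 →ₗ[𝕜] lp (fun _ : ℕ => V) 2}
    (hHs : ∀ w n, Hs w n = ∑ j ∈ Finset.Icc (-(k : ℤ)) l,
      a j (if 0 ≤ (n : ℤ) - j then w ((n : ℤ) - j).toNat else 0)) :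
    Hs = restrictNonneg 𝕜 V ∘ₗ H ∘ₗ extendByZero 𝕜 V :=
  LinearMap.ext fun w => lp.ext <| funext fun n => by simp [hH _ n, hHs]

end IsLaurentOperator

end LaurentOperator

open lp IsLaurentOperator in
/-- Let `H = ∑_{j=-k}^{l} a_j S^j` be an invertible bounded operator
on `ℓ²(ℤ; V)` given by a finite sum of shifts with coefficients `a_j ∈ End ℂ V`, and
let `H♯ = P_{≥0} H P_{≥0}*` be its compression to `ℓ²(ℤ_{≥0}; V)`.  Then `H♯` has
finite-dimensional kernel and finite-dimensional cokernel; i.e. it is Fredholm. -/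
theorem compression_of_invertible_laurent_operator_is_fredholm
    {V : Type} [NormedAddCommGroup V] [InnerProductSpace ℂ V] [FiniteDimensional ℂ V]
    (k l : ℕ) (a : ℤ → (V →L[ℂ] V))
    (H : lp (fun _ : ℤ => V) 2 →L[ℂ] lp (fun _ : ℤ => V) 2)
    (hH : ∀ (u : lp (fun _ : ℤ => V) 2) (n : ℤ),
      (H u : ∀ _ : ℤ, V) n =
        ∑ j ∈ Finset.Icc (-(k : ℤ)) (l : ℤ), a j ((u : ∀ _ : ℤ, V) (n - j)))
    (hinv : IsUnit H)
    (Hs : lp (fun _ : ℕ => V) 2 →L[ℂ] lp (fun _ : ℕ => V) 2)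
    (hHs : ∀ (w : lp (fun _ : ℕ => V) 2) (n : ℕ),
      (Hs w : ∀ _ : ℕ, V) n =
        ∑ j ∈ Finset.Icc (-(k : ℤ)) (l : ℤ),
          a j (if 0 ≤ (n : ℤ) - j then (w : ∀ _ : ℕ, V) ((n : ℤ) - j).toNat else 0)) :
    FiniteDimensional ℂ (LinearMap.ker (Hs : lp (fun _ : ℕ => V) 2 →ₗ[ℂ] lp (fun _ : ℕ => V) 2)) ∧
    FiniteDimensional ℂ
      (lp (fun _ : ℕ => V) 2 ⧸
        LinearMap.range (Hs : lp (fun _ : ℕ => V) 2 →ₗ[ℂ] lp (fun _ : ℕ => V) 2)) := by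
  have hLaurent : IsLaurentOperator k l a (H : _ →ₗ[ℂ] _) := hH
  obtain ⟨hinj, hsurj⟩ := ContinuousLinearMap.isUnit_iff_bijective.1 hinv
  have hG : Function.Injective
      ((H : lp (fun _ : ℤ => V) 2 →ₗ[ℂ] lp (fun _ : ℤ => V) 2) ∘ₗ extendByZero ℂ V) :=
    hinj.comp extendByZero_injective
  rw [hLaurent.compression_eq hHs]
  exact ⟨LinearMap.finiteDimensional_ker_comp_of_injective hG _
      (finiteDimensional_of_forall_apply_eq_zero _ hLaurent.apply_eq_zero_of_mem_range_inf_ker),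
    Submodule.finiteDimensional_quotient_of_sup_eq_top
      (LinearMap.range_comp_comp_sup_range_eq_top restrictNonneg_comp_extendByZero hsurj)
      (finiteDimensional_of_forall_apply_eq_zero _ hLaurent.apply_eq_zero_of_mem_range_comp_sub)⟩
end
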